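/- Let X be a metric space and let e₁, …, eₙ with n ≥ 3 be curves that pairwise intersect only in at most one point each (the edges of a polygon intersect only at shared endpoints). Let γ be a geodesic and suppose γ' is obtained from γ by replacing the subcurve of γ between its first and last intersection points with eₙ by the corresponding subcurve of eₙ (assumed to be a geodesic between those points). Then γ' is a geodesic with the same endpoints as γ, and |γ'| ∩ |eₙ| is connected. -/

import Mathlib

open Set

/-
Since `γ` is a geodesic and the variation is additive over `[0, l] ∪ [l, r] ∪ [r, 1]`, the
triangle inequality forces the middle piece of `γ` to be a geodesic as well, of length
`d(γ l, γ r)`; the substituted piece of `eₙ` has the same length, so the spliced curve has the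
same total length. Every parameter outside `[l, r]` is sent off `|eₙ|` by the choice of `l` and
`r`, so `|γ'| ∩ |eₙ|` is the image of the substituted arc, which is connected.
-/

/-- A geodesic in a metric space: a continuous curve on `[0,1]` whose length
(one-dimensional variation) equals the distance between its endpoints. -/
def IsGeodesic {X : Type*} [MetricSpace X] (γ : ℝ → X) : Prop :=
  ContinuousOn γ (Icc 0 1) ∧ eVariationOn γ (Icc 0 1) = edist (γ 0) (γ 1)

section Variation

variable {X : Type*} [PseudoMetricSpace X]

theorem eVariationOn_Icc_add_Icc (f : ℝ → X) {a b c : ℝ} (hab : a ≤ b) (hbc : b ≤ c) :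
    eVariationOn f (Icc a b) + eVariationOn f (Icc b c) = eVariationOn f (Icc a c) := by
  simpa using eVariationOn.Icc_add_Icc f (s := univ) hab hbc (mem_univ b)

theorem eVariationOn_Icc_eq_edist_of_le {f : ℝ → X} {a b c d : ℝ}
    (hf : eVariationOn f (Icc a d) = edist (f a) (f d))
    (hab : a ≤ b) (hbc : b ≤ c) (hcd : c ≤ d) :
    eVariationOn f (Icc b c) = edist (f b) (f c) := by
  refine le_antisymm ?_ (eVariationOn.edist_le f ⟨le_rfl, hbc⟩ ⟨hbc, le_rfl⟩)
  set A := eVariationOn f (Icc a b)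
  set C := eVariationOn f (Icc c d)
  have hsplit : A + eVariationOn f (Icc b c) + C = edist (f a) (f d) := by
    rw [eVariationOn_Icc_add_Icc f hab hbc, eVariationOn_Icc_add_Icc f (hab.trans hbc) hcd, hf]
  obtain ⟨hAB, hC⟩ := ENNReal.add_ne_top.1 (hsplit ▸ edist_ne_top _ _)
  have key : A + eVariationOn f (Icc b c) + C ≤ A + edist (f b) (f c) + C :=
    calc _ = edist (f a) (f d) := hsplit
      _ ≤ edist (f a) (f b) + edist (f b) (f c) + edist (f c) (f d) := edist_triangle4 _ _ _ _
      _ ≤ _ := by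
        gcongr
        · exact eVariationOn.edist_le f ⟨le_rfl, hab⟩ ⟨hab, le_rfl⟩
        · exact eVariationOn.edist_le f ⟨le_rfl, hcd⟩ ⟨hcd, le_rfl⟩
  exact (ENNReal.add_le_add_iff_left (ENNReal.add_ne_top.1 hAB).1).1
    ((ENNReal.add_le_add_iff_right hC).1 key)

theorem eVariationOn_Icc_eq_of_eqOn_Icc_of_eqOn_Icc {f g : ℝ → X} {a b c d : ℝ}
    (hab : a ≤ b) (hbc : b ≤ c) (hcd : c ≤ d)
    (hleft : EqOn f g (Icc a b)) (hright : EqOn f g (Icc c d))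
    (hmid : eVariationOn f (Icc b c) = eVariationOn g (Icc b c)) :
    eVariationOn f (Icc a d) = eVariationOn g (Icc a d) := by
  rw [← eVariationOn_Icc_add_Icc f (hab.trans hbc) hcd, ← eVariationOn_Icc_add_Icc f hab hbc,
    ← eVariationOn_Icc_add_Icc g (hab.trans hbc) hcd, ← eVariationOn_Icc_add_Icc g hab hbc,
    eVariationOn.eq_of_eqOn hleft, eVariationOn.eq_of_eqOn hright, hmid]

end Variation

theorem mapsTo_div_sub_Icc {l r : ℝ} (hlr : l ≤ r) :
    MapsTo (fun u => (u - l) / (r - l)) (Icc l r) (Icc 0 1) := fun _ hu =>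
  ⟨div_nonneg (sub_nonneg.2 hu.1) (sub_nonneg.2 hlr),
    div_le_one_of_le₀ (sub_le_sub_right hu.2 l) (sub_nonneg.2 hlr)⟩

theorem image_div_sub_Icc {l r : ℝ} (hlr : l < r) :
    (fun u => (u - l) / (r - l)) '' Icc l r = Icc 0 1 := by
  have hpos : 0 < r - l := sub_pos.2 hlr
  have hcomp : (fun u => (u - l) / (r - l)) = (fun x => x * (r - l)⁻¹) ∘ (fun u => u - l) := by
    ext u; simp [div_eq_mul_inv]
  rw [hcomp, image_comp, image_sub_const_Icc, image_mul_right_Icc' _ _ (inv_pos.2 hpos)]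
  simp [hpos.ne']

section Splice

variable {X : Type*}

-- When `l = r` the middle branch evaluates to `η 0`, since `0 / 0 = 0`.
noncomputable def splice (γ η : ℝ → X) (l r : ℝ) : ℝ → X := fun u =>
  if u < l then γ u else if u ≤ r then η ((u - l) / (r - l)) else γ u

variable {γ η : ℝ → X} {l r : ℝ}

theorem splice_of_mem_Icc {u : ℝ} (hu : u ∈ Icc l r) :
    splice γ η l r u = η ((u - l) / (r - l)) := by
  simp [splice, not_lt.2 hu.1, hu.2]

theorem splice_eqOn_Iic (hη0 : η 0 = γ l) : EqOn (splice γ η l r) γ (Iic l) := by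
  intro u hu
  rcases (mem_Iic.1 hu).lt_or_eq with hul | rfl
  · simp [splice, hul]
  · by_cases hur : u ≤ r
    · simp [splice, hur, hη0]
    · simp [splice, hur]

theorem splice_eqOn_Ici (hη0 : η 0 = γ l) (hη1 : η 1 = γ r) :
    EqOn (splice γ η l r) γ (Ici r) := by
  intro u hu
  rcases (mem_Ici.1 hu).lt_or_eq with hru | rfl
  · by_cases hul : u < l
    · simp [splice, hul]
    · simp [splice, hul, not_le.2 hru]
  · rcases lt_trichotomy r l with hrl | rfl | hlr
    · simp [splice, hrl]
    · simp [splice, hη0]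
    · simp [splice, not_lt.2 hlr.le, div_self (sub_ne_zero.2 hlr.ne'), hη1]

theorem eVariationOn_splice_Icc [PseudoMetricSpace X] (hlr : l ≤ r)
    (hη0 : η 0 = γ l) (hη1 : η 1 = γ r)
    (hηgeo : eVariationOn η (Icc 0 1) = edist (η 0) (η 1)) :
    eVariationOn (splice γ η l r) (Icc l r) = edist (γ l) (γ r) := by
  rcases hlr.lt_or_eq with hlr | rfl
  · rw [eVariationOn.eq_of_eqOn (f' := η ∘ fun u => (u - l) / (r - l))
        (fun u hu => splice_of_mem_Icc (γ := γ) (η := η) hu),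
      eVariationOn.comp_eq_of_monotoneOn η _
        (fun x _ y _ hxy => div_le_div_of_nonneg_right (sub_le_sub_right hxy l)
          (sub_nonneg.2 hlr.le)),
      image_div_sub_Icc hlr, hηgeo, hη0, hη1]
  · simp

theorem eVariationOn_splice_of_geodesic [PseudoMetricSpace X] {a b : ℝ}
    (hal : a ≤ l) (hlr : l ≤ r) (hrb : r ≤ b)
    (hγ : eVariationOn γ (Icc a b) = edist (γ a) (γ b))
    (hη0 : η 0 = γ l) (hη1 : η 1 = γ r)
    (hηgeo : eVariationOn η (Icc 0 1) = edist (η 0) (η 1)) :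
    eVariationOn (splice γ η l r) (Icc a b) = edist (γ a) (γ b) := by
  rw [← hγ]
  refine eVariationOn_Icc_eq_of_eqOn_Icc_of_eqOn_Icc hal hlr hrb
    ((splice_eqOn_Iic hη0).mono fun _ hu => hu.2)
    ((splice_eqOn_Ici hη0 hη1).mono fun _ hu => hu.1) ?_
  rw [eVariationOn_splice_Icc hlr hη0 hη1 hηgeo,
    eVariationOn_Icc_eq_edist_of_le hγ hal hlr hrb]

theorem splice_image_Icc_subset (hlr : l ≤ r) :
    splice γ η l r '' Icc l r ⊆ η '' Icc 0 1 := by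
  rintro _ ⟨u, hu, rfl⟩
  exact ⟨_, mapsTo_div_sub_Icc hlr hu, (splice_of_mem_Icc hu).symm⟩

theorem isConnected_splice_image_Icc [TopologicalSpace X] (hlr : l ≤ r)
    (hηc : ContinuousOn η (Icc 0 1)) : IsConnected (splice γ η l r '' Icc l r) := by
  rw [image_congr (fun u hu => splice_of_mem_Icc (γ := γ) (η := η) hu)]
  exact (isConnected_Icc hlr).image _
    (hηc.comp (by fun_prop) (mapsTo_div_sub_Icc hlr))

theorem splice_image_inter_eq {E : Set X} {a b : ℝ}
    (hal : a ≤ l) (hlr : l ≤ r) (hrb : r ≤ b)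
    (hη0 : η 0 = γ l) (hη1 : η 1 = γ r) (hηE : η '' Icc 0 1 ⊆ E)
    (hhit : ∀ t ∈ Icc a b, γ t ∈ E → t ∈ Icc l r) :
    (splice γ η l r '' Icc a b) ∩ E = splice γ η l r '' Icc l r := by
  refine Subset.antisymm ?_ fun x hx =>
    ⟨image_mono (Icc_subset_Icc hal hrb) hx, hηE (splice_image_Icc_subset hlr hx)⟩
  rintro _ ⟨⟨u, hu, rfl⟩, huE⟩
  refine ⟨u, ⟨le_of_not_gt fun hul => ?_, le_of_not_gt fun hru => ?_⟩, rfl⟩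
  · exact hul.not_ge (hhit u hu (splice_eqOn_Iic hη0 hul.le ▸ huE)).1
  · exact hru.not_ge (hhit u hu (splice_eqOn_Ici hη0 hη1 hru.le ▸ huE)).2

end Splice

theorem stmt17_general {X : Type*} [MetricSpace X]
    (E : Set X) (γ : ℝ → X) (hγ : IsGeodesic γ)
    (hmeet : {t ∈ Icc (0 : ℝ) 1 | γ t ∈ E}.Nonempty)
    (l r : ℝ) (hl : l = sInf {t ∈ Icc (0 : ℝ) 1 | γ t ∈ E})
    (hr : r = sSup {t ∈ Icc (0 : ℝ) 1 | γ t ∈ E})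
    (η : ℝ → X) (hηc : ContinuousOn η (Icc 0 1))
    (hη0 : η 0 = γ l) (hη1 : η 1 = γ r) (hηE : η '' Icc 0 1 ⊆ E)
    (hηgeo : eVariationOn η (Icc 0 1) = edist (η 0) (η 1)) :
    let γ' : ℝ → X := fun u =>
      if u < l then γ u else if u ≤ r then η ((u - l) / (r - l)) else γ u
    γ' 0 = γ 0 ∧ γ' 1 = γ 1 ∧
    eVariationOn γ' (Icc 0 1) = edist (γ 0) (γ 1) ∧
    IsConnected ((γ' '' Icc 0 1) ∩ E) := by
  change splice γ η l r 0 = γ 0 ∧ splice γ η l r 1 = γ 1 ∧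
    eVariationOn (splice γ η l r) (Icc 0 1) = edist (γ 0) (γ 1) ∧
    IsConnected ((splice γ η l r '' Icc 0 1) ∩ E)
  set S := {t ∈ Icc (0 : ℝ) 1 | γ t ∈ E}
  have hS : S ⊆ Icc 0 1 := fun _ ht => ht.1
  have hSbelow : BddBelow S := bddBelow_Icc.mono hS
  have hSabove : BddAbove S := bddAbove_Icc.mono hS
  have hl0 : 0 ≤ l := hl ▸ le_csInf hmeet fun _ ht => ht.1.1
  have hr1 : r ≤ 1 := hr ▸ csSup_le hmeet fun _ ht => ht.1.2
  have hlr : l ≤ r := hl ▸ hr ▸ csInf_le_csSup hmeet hSbelow hSabove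
  have hhit : ∀ t ∈ Icc 0 1, γ t ∈ E → t ∈ Icc l r := fun t ht htE =>
    ⟨hl ▸ csInf_le hSbelow ⟨ht, htE⟩, hr ▸ le_csSup hSabove ⟨ht, htE⟩⟩
  refine ⟨splice_eqOn_Iic hη0 hl0, splice_eqOn_Ici hη0 hη1 hr1,
    eVariationOn_splice_of_geodesic hl0 hlr hr1 hγ.2 hη0 hη1 hηgeo, ?_⟩
  rw [splice_image_inter_eq hl0 hlr hr1 hη0 hη1 hηE hhit]
  exact isConnected_splice_image_Icc hlr hηc

/-- Let `e₁, …, eₙ` (`n ≥ 3`) be curves pairwise intersecting in at most one point, and `γ`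
a geodesic meeting the image `E` of `eᵢ`. If `γ'` is obtained from `γ` by replacing the
subcurve between the first and last intersection times with `E` by a geodesic subcurve `η`
of `eᵢ` between the same points, then `γ'` is a geodesic with the same endpoints as `γ`, and
`|γ'| ∩ E` is connected. -/
theorem stmt17 {X : Type*} [MetricSpace X] (n : ℕ) (hn : 3 ≤ n) (e : Fin n → ℝ → X)
    (hecont : ∀ i, ContinuousOn (e i) (Icc 0 1))
    (hpair : ∀ i j, i ≠ j → ((e i '' Icc 0 1) ∩ (e j '' Icc 0 1)).Subsingleton)
    (i : Fin n) (E : Set X) (hE : E = e i '' Icc 0 1)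
    (γ : ℝ → X) (hγ : IsGeodesic γ)
    (hmeet : {t ∈ Icc (0 : ℝ) 1 | γ t ∈ E}.Nonempty)
    (l r : ℝ) (hl : l = sInf {t ∈ Icc (0 : ℝ) 1 | γ t ∈ E})
    (hr : r = sSup {t ∈ Icc (0 : ℝ) 1 | γ t ∈ E})
    (η : ℝ → X) (hηc : ContinuousOn η (Icc 0 1))
    (hη0 : η 0 = γ l) (hη1 : η 1 = γ r) (hηE : η '' Icc 0 1 ⊆ E)
    (hηgeo : eVariationOn η (Icc 0 1) = edist (η 0) (η 1)) :
    let γ' : ℝ → X := fun u =>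
      if u < l then γ u else if u ≤ r then η ((u - l) / (r - l)) else γ u
    γ' 0 = γ 0 ∧ γ' 1 = γ 1 ∧
    eVariationOn γ' (Icc 0 1) = edist (γ 0) (γ 1) ∧
    IsConnected ((γ' '' Icc 0 1) ∩ E) :=
  stmt17_general E γ hγ hmeet l r hl hr η hηc hη0 hη1 hηE hηgeo
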